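/- arXiv:1906.08426 — 4 statements merged into one kernel-verified Lean document; each statement's English description precedes it below -/
import Mathlib

section
/- For all real numbers x, z, and σ, the quantity |σ²z² + 2σxz| / ((1+x²)(1+(x+σz)²)) is bounded above by min{1, σ²z² + |σz|}. -/
theorem ratio_bound (x z σ : ℝ) :
    |σ ^ 2 * z ^ 2 + 2 * σ * x * z| / ((1 + x ^ 2) * (1 + (x + σ * z) ^ 2)) ≤
      min 1 (σ ^ 2 * z ^ 2 + |σ * z|) := by
  have hD : (0:ℝ) < (1 + x ^ 2) * (1 + (x + σ * z) ^ 2) := by positivity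
  refine le_min ?_ ?_
  · rw [div_le_iff₀ hD]
    rcases abs_cases (σ ^ 2 * z ^ 2 + 2 * σ * x * z) with ⟨h, _⟩ | ⟨h, _⟩ <;> rw [h] <;>
      nlinarith [sq_nonneg (x * (x + σ * z)), sq_nonneg x, sq_nonneg (x + σ * z)]
  · rw [div_le_iff₀ hD]
    have h1 : |2 * x + σ * z| ≤ (1 + x ^ 2) * (1 + (x + σ * z) ^ 2) := by
      rcases abs_cases (2 * x + σ * z) with ⟨h, _⟩ | ⟨h, _⟩ <;> rw [h] <;>
        nlinarith [sq_nonneg (x - 1), sq_nonneg (x + 1), sq_nonneg (x + σ * z - 1),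
          sq_nonneg (x + σ * z + 1), sq_nonneg (x * (x + σ * z))]
    calc |σ ^ 2 * z ^ 2 + 2 * σ * x * z| = |σ * z| * |2 * x + σ * z| := by
          rw [← abs_mul]; ring_nf
      _ ≤ |σ * z| * ((1 + x ^ 2) * (1 + (x + σ * z) ^ 2)) :=
          mul_le_mul_of_nonneg_left h1 (abs_nonneg _)
      _ ≤ (σ ^ 2 * z ^ 2 + |σ * z|) * ((1 + x ^ 2) * (1 + (x + σ * z) ^ 2)) := by
          nlinarith [mul_nonneg (mul_nonneg (sq_nonneg σ) (sq_nonneg z)) hD.le]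
end

section
/- For all real numbers x, z, σ, one has log(1+(x+σz)²) − log(1+x²) ≤ 2·log(1+|σz|). -/
theorem log_diff_bound (x z σ : ℝ) :
    Real.log (1 + (x + σ * z) ^ 2) - Real.log (1 + x ^ 2) ≤
      2 * Real.log (1 + |σ * z|) := by
  set a := σ * z with ha
  have hx : (0:ℝ) < 1 + x ^ 2 := by positivity
  have ha1 : (0:ℝ) < 1 + |a| := by positivity
  have key : 1 + (x + a) ^ 2 ≤ (1 + |a|) ^ 2 * (1 + x ^ 2) := by
    have h1 : 2 * (x * a) ≤ 2 * (|x| * |a|) := by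
      have := le_abs_self (x * a)
      rw [abs_mul] at this
      linarith
    have h2 : 2 * (|x| * |a|) ≤ |a| * (1 + x ^ 2) := by
      nlinarith [sq_nonneg (|x| - 1), abs_nonneg a, sq_abs x]
    nlinarith [abs_nonneg a, sq_abs a, sq_nonneg x, sq_nonneg (x*|a|)]
  have hlog : Real.log (1 + (x + a) ^ 2) ≤
      Real.log ((1 + |a|) ^ 2 * (1 + x ^ 2)) :=
    Real.log_le_log (by positivity) key
  rw [Real.log_mul (by positivity) (ne_of_gt hx), Real.log_pow] at hlog
  push_cast at hlog
  linarith
end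

section
/- Let ν be a σ-finite measure on ℝ \ {0} satisfying ∫ min(1, |z|²) ν(dz) < ∞ and ∫ log(1+|z|) ν(dz) < ∞, and let σ ∈ ℝ. Then lim_{|x|→∞} ∫ (σ²z² + 2σxz)/((1+x²)(1+(x+σz)²)) ν(dz) = 0. -/
/-!
With `g t = (1 + t²)⁻¹` the integrand is `g x - g (x + σ z)`. Since `0 < g ≤ 1` and `g` is
1-Lipschitz, it is dominated by `(1 + |σ|) min(1, |z|)`, which is `ν`-integrable because
`min(1, |z|) ≤ log(1 + |z|) / log 2`. As `g` vanishes at infinity, dominated convergence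
along `atTop` and `atBot` concludes.
-/

open Real Filter MeasureTheory Topology

lemma mul_log_two_le_log_one_add {t : ℝ} (ht₀ : 0 ≤ t) (ht₁ : t ≤ 1) :
    t * log 2 ≤ log (1 + t) := by
  -- Bernoulli's inequality for an exponent in `[0, 1]`: `2 ^ t ≤ 1 + t`.
  have h := rpow_one_add_le_one_add_mul_self (s := 1) (by norm_num) ht₀ ht₁
  rw [mul_one, one_add_one_eq_two] at h
  rw [← log_rpow two_pos]
  exact log_le_log (by positivity) (by linarith)

lemma min_one_abs_le_log_one_add_abs_div_log_two (z : ℝ) :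
    min 1 |z| ≤ log (1 + |z|) / log 2 := by
  rw [le_div_iff₀ (log_pos one_lt_two)]
  rcases le_total |z| 1 with hz | hz
  · simpa [min_eq_right hz] using mul_log_two_le_log_one_add (abs_nonneg z) hz
  · rw [min_eq_left hz, one_mul]
    exact log_le_log two_pos (by linarith)

lemma integrable_min_one_abs_of_integrable_log {ν : Measure ℝ}
    (hν : Integrable (fun z => log (1 + |z|)) ν) :
    Integrable (fun z => min 1 |z|) ν := by
  refine (hν.div_const (log 2)).mono' (by fun_prop) (ae_of_all _ fun z => ?_)
  rw [norm_of_nonneg (le_min zero_le_one (abs_nonneg z))]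
  exact min_one_abs_le_log_one_add_abs_div_log_two z

lemma min_one_mul_le_one_add_mul_min_one {c t : ℝ} (hc : 0 ≤ c) (ht : 0 ≤ t) :
    min 1 (c * t) ≤ (1 + c) * min 1 t := by
  rcases le_total t 1 with h | h
  · rw [min_eq_right h]
    exact (min_le_right _ _).trans (by nlinarith)
  · rw [min_eq_left h]
    exact (min_le_left _ _).trans (by linarith)

lemma abs_inv_one_add_sq_sub_inv_one_add_sq_le_one (a b : ℝ) :
    |(1 + a ^ 2)⁻¹ - (1 + b ^ 2)⁻¹| ≤ 1 := by
  have ha : (1 + a ^ 2)⁻¹ ≤ 1 := inv_le_one_of_one_le₀ (by nlinarith)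
  have hb : (1 + b ^ 2)⁻¹ ≤ 1 := inv_le_one_of_one_le₀ (by nlinarith)
  rw [abs_sub_le_iff]
  constructor <;> linarith [inv_pos.2 (by positivity : (0:ℝ) < 1 + a ^ 2),
    inv_pos.2 (by positivity : (0:ℝ) < 1 + b ^ 2)]

lemma lipschitzWith_inv_one_add_sq : LipschitzWith 1 (fun t : ℝ => (1 + t ^ 2)⁻¹) := by
  refine LipschitzWith.of_dist_le_mul fun a b => ?_
  have ha : 0 < 1 + a ^ 2 := by positivity
  have hb : 0 < 1 + b ^ 2 := by positivity
  have hsum : |a + b| ≤ (1 + a ^ 2) * (1 + b ^ 2) := by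
    nlinarith [abs_add_le a b, sq_abs a, sq_abs b, sq_nonneg (|a| - 1/2),
      sq_nonneg (|b| - 1/2), mul_nonneg (sq_nonneg a) (sq_nonneg b)]
  rw [NNReal.coe_one, one_mul, dist_eq_norm, dist_eq_norm, norm_eq_abs, norm_eq_abs,
    inv_sub_inv ha.ne' hb.ne', abs_div, abs_of_pos (mul_pos ha hb),
    div_le_iff₀ (mul_pos ha hb), show 1 + b ^ 2 - (1 + a ^ 2) = (b + a) * (b - a) by ring,
    abs_mul, abs_sub_comm b a, add_comm b a]
  rw [mul_comm |a - b|]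
  exact mul_le_mul_of_nonneg_right hsum (abs_nonneg _)

lemma tendsto_inv_one_add_sq_cocompact :
    Tendsto (fun t : ℝ => (1 + t ^ 2)⁻¹) (cocompact ℝ) (𝓝 0) := by
  refine tendsto_inv_atTop_zero.comp (tendsto_atTop_add_const_left _ _ ?_)
  exact ((tendsto_pow_atTop two_ne_zero).comp tendsto_norm_cocompact_atTop).congr fun t => by
    simp only [Function.comp_apply, norm_eq_abs, sq_abs]

lemma abs_inv_one_add_sq_sub_inv_one_add_sq_add_le (σ x z : ℝ) :
    |(1 + x ^ 2)⁻¹ - (1 + (x + σ * z) ^ 2)⁻¹| ≤ (1 + |σ|) * min 1 |z| := by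
  have hlip := lipschitzWith_inv_one_add_sq.dist_le_mul x (x + σ * z)
  rw [NNReal.coe_one, one_mul, dist_eq_norm, dist_eq_norm, norm_eq_abs, norm_eq_abs,
    sub_add_cancel_left, abs_neg, abs_mul] at hlip
  calc _ ≤ min 1 (|σ| * |z|) := le_min (abs_inv_one_add_sq_sub_inv_one_add_sq_le_one _ _) hlip
    _ ≤ _ := min_one_mul_le_one_add_mul_min_one (abs_nonneg σ) (abs_nonneg z)

lemma tendsto_integral_inv_one_add_sq_sub_inv_one_add_sq_add {ν : Measure ℝ}
    (hν : Integrable (fun z => min 1 |z|) ν) (σ : ℝ) {l : Filter ℝ} [l.IsCountablyGenerated]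
    (hl : l ≤ cocompact ℝ) :
    Tendsto (fun x => ∫ z, ((1 + x ^ 2)⁻¹ - (1 + (x + σ * z) ^ 2)⁻¹) ∂ν) l (𝓝 0) := by
  have hlim : ∀ z, Tendsto (fun x => (1 + x ^ 2)⁻¹ - (1 + (x + σ * z) ^ 2)⁻¹) l (𝓝 0) := by
    intro z
    have hshift := (Homeomorph.addRight (σ * z)).isClosedEmbedding.tendsto_cocompact
    simpa using (tendsto_inv_one_add_sq_cocompact.sub
      (tendsto_inv_one_add_sq_cocompact.comp hshift)).mono_left hl
  simpa using tendsto_integral_filter_of_dominated_convergence _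
    (Eventually.of_forall fun x => by fun_prop)
    (Eventually.of_forall fun x => ae_of_all _ (abs_inv_one_add_sq_sub_inv_one_add_sq_add_le σ x))
    (hν.const_mul (1 + |σ|)) (ae_of_all _ hlim)

lemma div_eq_inv_one_add_sq_sub_inv_one_add_sq_add (σ x z : ℝ) :
    (σ ^ 2 * z ^ 2 + 2 * σ * x * z) / ((1 + x ^ 2) * (1 + (x + σ * z) ^ 2)) =
      (1 + x ^ 2)⁻¹ - (1 + (x + σ * z) ^ 2)⁻¹ := by
  rw [inv_sub_inv (by positivity) (by positivity)]
  ring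

theorem jump_integral_tendsto_zero_general (ν : Measure ℝ)
    (hν2 : Integrable (fun z => Real.log (1 + |z|)) ν)
    (σ : ℝ) :
    Tendsto (fun x => ∫ z, (σ ^ 2 * z ^ 2 + 2 * σ * x * z) /
        ((1 + x ^ 2) * (1 + (x + σ * z) ^ 2)) ∂ν) atTop (nhds 0) ∧
    Tendsto (fun x => ∫ z, (σ ^ 2 * z ^ 2 + 2 * σ * x * z) /
        ((1 + x ^ 2) * (1 + (x + σ * z) ^ 2)) ∂ν) atBot (nhds 0) := by
  have hν := integrable_min_one_abs_of_integrable_log hν2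
  simp only [div_eq_inv_one_add_sq_sub_inv_one_add_sq_add]
  exact ⟨tendsto_integral_inv_one_add_sq_sub_inv_one_add_sq_add hν σ atTop_le_cocompact,
    tendsto_integral_inv_one_add_sq_sub_inv_one_add_sq_add hν σ atBot_le_cocompact⟩

theorem jump_integral_tendsto_zero (ν : Measure ℝ) [SigmaFinite ν]
    (hν0 : ν {0} = 0)
    (hν1 : Integrable (fun z => min 1 (z ^ 2)) ν)
    (hν2 : Integrable (fun z => Real.log (1 + |z|)) ν)
    (σ : ℝ) :
    Tendsto (fun x => ∫ z, (σ ^ 2 * z ^ 2 + 2 * σ * x * z) /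
        ((1 + x ^ 2) * (1 + (x + σ * z) ^ 2)) ∂ν) atTop (nhds 0) ∧
    Tendsto (fun x => ∫ z, (σ ^ 2 * z ^ 2 + 2 * σ * x * z) /
        ((1 + x ^ 2) * (1 + (x + σ * z) ^ 2)) ∂ν) atBot (nhds 0) :=
  jump_integral_tendsto_zero_general ν hν2 σ
end

section
/- Let ν be a σ-finite measure on ℝ \ {0} with ν({0}) = 0, ∫ (1 ∧ |z|²) ν(dz) < ∞, and ∫ log(1+|z|) ν(dz) < ∞. Let σ ∈ ℝ, and define J h(x) = ∫ [log(1+(x+σz)²) − log(1+x²) − (2xσz/(1+x²))·1_{0<|z|<1}] ν(dz). Then lim_{|x|→∞} J h(x) = 0. -/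
open Real Filter MeasureTheory Set

-- aux lemma 1: log difference bound one-sided
lemma my_logdiff_le (x a : ℝ) :
    Real.log (1 + (x + a) ^ 2) - Real.log (1 + x ^ 2) ≤ 2 * Real.log (1 + |a|) := by
  have h1 : (0:ℝ) < 1 + x ^ 2 := by positivity
  have h2 : (0:ℝ) < 1 + |a| := by positivity
  have key : 1 + (x + a) ^ 2 ≤ (1 + x ^ 2) * (1 + |a|) ^ 2 := by
    nlinarith [sq_abs a, abs_nonneg a, abs_nonneg x, le_abs_self (a * x), abs_mul a x,
      sq_abs x, mul_nonneg (abs_nonneg a) (sq_nonneg (|x| - 1)), sq_nonneg (x * |a|)]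
  have h3 : Real.log (1 + (x + a) ^ 2) ≤ Real.log ((1 + x ^ 2) * (1 + |a|) ^ 2) := by
    apply Real.log_le_log (by positivity) key
  rw [Real.log_mul (ne_of_gt h1) (by positivity), Real.log_pow] at h3
  push_cast at h3
  linarith

lemma my_logdiff_abs (x a : ℝ) :
    |Real.log (1 + (x + a) ^ 2) - Real.log (1 + x ^ 2)| ≤ 2 * Real.log (1 + |a|) := by
  rw [abs_le]
  constructor
  · have := my_logdiff_le (x + a) (-a)
    rw [abs_neg] at this
    have e : x + a + -a = x := by ring
    rw [e] at this
    linarith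
  · exact my_logdiff_le x a

lemma my_half_le_log (t : ℝ) (h0 : 0 ≤ t) (h1 : t ≤ 1) : t ≤ 2 * Real.log (1 + t) := by
  have h2 : (0:ℝ) < 1 - t / 2 := by linarith
  have hE := Real.add_one_le_exp (-(t / 2))
  rw [Real.exp_neg] at hE
  have hEpos := Real.exp_pos (t / 2)
  have hE2 : Real.exp (t / 2) * (1 - t / 2) ≤ 1 := by
    have := mul_le_mul_of_nonneg_left hE (le_of_lt hEpos)
    rw [mul_inv_cancel₀ (ne_of_gt hEpos)] at this
    linarith
  have hexp : Real.exp (t / 2) ≤ 1 + t := by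
    nlinarith
  have : t / 2 ≤ Real.log (1 + t) :=
    (Real.le_log_iff_exp_le (by linarith)).mpr hexp
  linarith

lemma my_log_le_self (t : ℝ) (h0 : 0 ≤ t) : Real.log (1 + t) ≤ t := by
  have := Real.log_le_sub_one_of_pos (x := 1 + t) (by linarith)
  linarith

lemma my_bound (σ x z : ℝ) :
    |Real.log (1 + (x + σ * z) ^ 2) - Real.log (1 + x ^ 2) -
        Set.indicator {z : ℝ | 0 < |z| ∧ |z| < 1} (fun z => 2 * x * σ * z / (1 + x ^ 2)) z|
      ≤ 6 * (|σ| + 1) * Real.log (1 + |z|) + 2 * Real.log (1 + |σ|) * min 1 (z ^ 2) := by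
  have hlz : (0:ℝ) ≤ Real.log (1 + |z|) := Real.log_nonneg (by simp [abs_nonneg])
  have hls : (0:ℝ) ≤ Real.log (1 + |σ|) := Real.log_nonneg (by simp [abs_nonneg])
  have hld := my_logdiff_abs x (σ * z)
  rw [abs_mul] at hld
  have hx2 : (0:ℝ) < 1 + x ^ 2 := by positivity
  have hxb : |2 * x / (1 + x ^ 2)| ≤ 1 := by
    rw [abs_div, abs_of_pos hx2, div_le_one hx2]
    cases abs_cases (2 * x) with
    | inl h => nlinarith [h.1, sq_nonneg (x - 1)]
    | inr h => nlinarith [h.1, sq_nonneg (x + 1)]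
  have htri : |Real.log (1 + (x + σ * z) ^ 2) - Real.log (1 + x ^ 2) -
          Set.indicator {z : ℝ | 0 < |z| ∧ |z| < 1} (fun z => 2 * x * σ * z / (1 + x ^ 2)) z|
        ≤ |Real.log (1 + (x + σ * z) ^ 2) - Real.log (1 + x ^ 2)| +
          |Set.indicator {z : ℝ | 0 < |z| ∧ |z| < 1} (fun z => 2 * x * σ * z / (1 + x ^ 2)) z| :=
    abs_sub _ _
  have hind : |Set.indicator {z : ℝ | 0 < |z| ∧ |z| < 1}
      (fun z => 2 * x * σ * z / (1 + x ^ 2)) z| ≤ |σ| * min |z| 1 := by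
    by_cases hz : z ∈ {z : ℝ | 0 < |z| ∧ |z| < 1}
    · rw [Set.indicator_of_mem hz]
      rw [show 2 * x * σ * z / (1 + x ^ 2) = (2 * x / (1 + x ^ 2)) * (σ * z) by ring,
        abs_mul, abs_mul]
      have hmin : min |z| 1 = |z| := min_eq_left (le_of_lt hz.2)
      rw [hmin]
      calc |2 * x / (1 + x ^ 2)| * (|σ| * |z|) ≤ 1 * (|σ| * |z|) :=
            mul_le_mul_of_nonneg_right hxb (by positivity)
        _ = |σ| * |z| := by ring
    · rw [Set.indicator_of_notMem hz]
      simp only [abs_zero]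
      positivity
  rcases le_or_gt 1 |z| with hz1 | hz1
  · -- |z| ≥ 1
    have hmin1 : min 1 (z ^ 2) = 1 := min_eq_left (by nlinarith [sq_abs z])
    have hmin2 : min |z| 1 = 1 := min_eq_right hz1
    rw [hmin2] at hind
    have hlog2 : Real.log (1 + |σ| * |z|) ≤ Real.log (1 + |σ|) + Real.log (1 + |z|) := by
      have hm : 1 + |σ| * |z| ≤ (1 + |σ|) * (1 + |z|) := by
        nlinarith [abs_nonneg σ, abs_nonneg z]
      calc Real.log (1 + |σ| * |z|) ≤ Real.log ((1 + |σ|) * (1 + |z|)) :=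
            Real.log_le_log (by positivity) hm
        _ = Real.log (1 + |σ|) + Real.log (1 + |z|) :=
            Real.log_mul (by positivity) (by positivity)
    have h1 : 1 ≤ 2 * Real.log (1 + |z|) := by
      have ha := my_half_le_log 1 (by norm_num) (by norm_num)
      have hb : Real.log (1 + 1) ≤ Real.log (1 + |z|) :=
        Real.log_le_log (by norm_num) (by linarith)
      linarith
    rw [hmin1]
    nlinarith [mul_nonneg (abs_nonneg σ) hlz]
  · -- |z| < 1
    have hmin2 : min |z| 1 = |z| := min_eq_left (le_of_lt hz1)
    rw [hmin2] at hind
    have hlog3 : Real.log (1 + |σ| * |z|) ≤ |σ| * |z| :=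
      my_log_le_self _ (by positivity)
    have hhl := my_half_le_log |z| (abs_nonneg z) (le_of_lt hz1)
    have hmin3 : (0:ℝ) ≤ min 1 (z ^ 2) := le_min (by norm_num) (sq_nonneg z)
    nlinarith [mul_nonneg hls hmin3,
      mul_le_mul_of_nonneg_left hhl (abs_nonneg σ), mul_nonneg (abs_nonneg σ) hlz]

lemma my_aux_top (ν : Measure ℝ) [SigmaFinite ν]
    (hν1 : Integrable (fun z => min 1 (z ^ 2)) ν)
    (hν2 : Integrable (fun z => Real.log (1 + |z|)) ν)
    (σ : ℝ) :
    Tendsto (fun x => ∫ z,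
      (Real.log (1 + (x + σ * z) ^ 2) - Real.log (1 + x ^ 2) -
        Set.indicator {z : ℝ | 0 < |z| ∧ |z| < 1} (fun z => 2 * x * σ * z / (1 + x ^ 2)) z) ∂ν)
      atTop (nhds 0) := by
  have hS : MeasurableSet {z : ℝ | 0 < |z| ∧ |z| < 1} := by
    have : IsOpen {z : ℝ | 0 < |z| ∧ |z| < 1} := by
      have h1 : IsOpen {z : ℝ | 0 < |z|} := isOpen_lt continuous_const continuous_abs
      have h2 : IsOpen {z : ℝ | |z| < 1} := isOpen_lt continuous_abs continuous_const
      exact h1.inter h2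
    exact this.measurableSet
  have key := tendsto_integral_filter_of_dominated_convergence (μ := ν) (l := atTop)
    (F := fun x z => Real.log (1 + (x + σ * z) ^ 2) - Real.log (1 + x ^ 2) -
        Set.indicator {z : ℝ | 0 < |z| ∧ |z| < 1} (fun z => 2 * x * σ * z / (1 + x ^ 2)) z)
    (f := fun _ => (0:ℝ))
    (fun z => 6 * (|σ| + 1) * Real.log (1 + |z|) + 2 * Real.log (1 + |σ|) * min 1 (z ^ 2))
    ?_ ?_ ?_ ?_
  · simpa using key
  · -- measurability
    filter_upwards with x
    apply Measurable.aestronglyMeasurable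
    apply Measurable.sub
    · apply Measurable.sub
      · exact Real.measurable_log.comp (by fun_prop)
      · exact measurable_const
    · exact (by fun_prop : Measurable fun z : ℝ => 2 * x * σ * z / (1 + x ^ 2)).indicator hS
  · -- bound
    filter_upwards with x
    filter_upwards with z
    exact my_bound σ x z
  · -- integrability of bound
    exact (hν2.const_mul _).add (hν1.const_mul _)
  · -- pointwise limit
    filter_upwards with z
    set c := σ * z with hc
    set s : ℝ := if z ∈ {z : ℝ | 0 < |z| ∧ |z| < 1} then 1 else 0 with hs
    set Φ : ℝ → ℝ := fun t =>
      Real.log ((t ^ 2 + (1 + c * t) ^ 2) / (t ^ 2 + 1)) - s * (2 * c * t / (t ^ 2 + 1)) with hΦ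
    have hΦ0 : Φ 0 = 0 := by simp [hΦ]
    have hcont : ContinuousAt Φ 0 := by
      apply ContinuousAt.sub
      · have h1 : ContinuousAt (fun t : ℝ => (t ^ 2 + (1 + c * t) ^ 2) / (t ^ 2 + 1)) 0 := by
          apply ContinuousAt.div (by fun_prop) (by fun_prop)
          norm_num
        have hg : ((0:ℝ) ^ 2 + (1 + c * 0) ^ 2) / ((0:ℝ) ^ 2 + 1) = 1 := by norm_num
        exact ContinuousAt.comp (by rw [hg]; exact Real.continuousAt_log one_ne_zero) h1
      · apply ContinuousAt.mul continuousAt_const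
        apply ContinuousAt.div (by fun_prop) (by fun_prop)
        norm_num
    have hx : Tendsto (fun x : ℝ => Φ x⁻¹) atTop (nhds 0) := by
      have h2 := hcont.tendsto
      rw [hΦ0] at h2
      exact h2.comp tendsto_inv_atTop_zero
    apply hx.congr'
    filter_upwards [eventually_ge_atTop (1:ℝ)] with x hx1
    have hx0 : x ≠ 0 := by intro h; rw [h] at hx1; norm_num at hx1
    have e1 : ((x⁻¹) ^ 2 + (1 + c * x⁻¹) ^ 2) / ((x⁻¹) ^ 2 + 1)
        = (1 + (x + c) ^ 2) / (1 + x ^ 2) := by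
      field_simp
      try ring
    have e2 : 2 * c * x⁻¹ / ((x⁻¹) ^ 2 + 1) = 2 * x * c / (1 + x ^ 2) := by
      field_simp
      try ring
    have hxx : (0:ℝ) < 1 + x ^ 2 := by positivity
    have hxc : (0:ℝ) < 1 + (x + c) ^ 2 := by positivity
    show Φ x⁻¹ = _
    rw [hΦ]
    simp only []
    rw [e1, e2, Real.log_div (ne_of_gt hxc) (ne_of_gt hxx)]
    congr 1
    by_cases hz : z ∈ {z : ℝ | 0 < |z| ∧ |z| < 1}
    · rw [Set.indicator_of_mem hz]
      rw [hs]
      simp only [hz, if_pos]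
      rw [hc]; ring
    · rw [Set.indicator_of_notMem hz, hs, if_neg hz, zero_mul]

theorem jump_part_log_tendsto_zero (ν : Measure ℝ) [SigmaFinite ν]
    (hν0 : ν {0} = 0)
    (hν1 : Integrable (fun z => min 1 (z ^ 2)) ν)
    (hν2 : Integrable (fun z => Real.log (1 + |z|)) ν)
    (σ : ℝ)
    (Jh : ℝ → ℝ)
    (hJh : Jh = fun x => ∫ z,
      (Real.log (1 + (x + σ * z) ^ 2) - Real.log (1 + x ^ 2) -
        Set.indicator {z : ℝ | 0 < |z| ∧ |z| < 1} (fun z => 2 * x * σ * z / (1 + x ^ 2)) z) ∂ν) :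
    Tendsto Jh atTop (nhds 0) ∧ Tendsto Jh atBot (nhds 0) := by
  subst hJh
  refine ⟨my_aux_top ν hν1 hν2 σ, ?_⟩
  have h2 := (my_aux_top ν hν1 hν2 (-σ)).comp (tendsto_neg_atBot_atTop : Tendsto (fun x : ℝ => -x) atBot atTop)
  have key : ∀ x : ℝ, (∫ z,
      (Real.log (1 + (-x + -σ * z) ^ 2) - Real.log (1 + (-x) ^ 2) -
        Set.indicator {z : ℝ | 0 < |z| ∧ |z| < 1}
          (fun z => 2 * -x * -σ * z / (1 + (-x) ^ 2)) z) ∂ν)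
      = ∫ z, (Real.log (1 + (x + σ * z) ^ 2) - Real.log (1 + x ^ 2) -
        Set.indicator {z : ℝ | 0 < |z| ∧ |z| < 1}
          (fun z => 2 * x * σ * z / (1 + x ^ 2)) z) ∂ν := by
    intro x
    congr 1
    funext z
    have e1 : (-x + -σ * z) ^ 2 = (x + σ * z) ^ 2 := by ring
    have e2 : (-x : ℝ) ^ 2 = x ^ 2 := by ring
    have e3 : (fun z : ℝ => 2 * -x * -σ * z / (1 + x ^ 2))
        = (fun z : ℝ => 2 * x * σ * z / (1 + x ^ 2)) := by funext w; ring_nf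
    rw [e1, e2, e3]
  have h3 : (fun x : ℝ => ∫ z,
      (Real.log (1 + (x + -σ * z) ^ 2) - Real.log (1 + x ^ 2) -
        Set.indicator {z : ℝ | 0 < |z| ∧ |z| < 1}
          (fun z => 2 * x * -σ * z / (1 + x ^ 2)) z) ∂ν) ∘ (fun x : ℝ => -x)
      = fun x : ℝ => ∫ z,
      (Real.log (1 + (x + σ * z) ^ 2) - Real.log (1 + x ^ 2) -
        Set.indicator {z : ℝ | 0 < |z| ∧ |z| < 1}
          (fun z => 2 * x * σ * z / (1 + x ^ 2)) z) ∂ν := by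
    funext x
    exact key x
  rwa [h3] at h2
end
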